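/- Let μ ∈ ℝ^p and let Σ ∈ ℝ^{p×p} be symmetric positive definite, and let q be the density of the normal distribution N(μ, Σ) on ℝ^p, q(x) = (2π)^{-p/2} (det Σ)^{-1/2} exp(−(x−μ)ᵀΣ^{-1}(x−μ)/2). For j ∈ {1,…,p}, the function Φ_{μ_j}(x) := x_j − μ_j satisfies: (i) A(∇_x Φ_{μ_j})(x) = −(Σ^{-1}(x−μ))_j = −∂_{μ_j} log q(x) for all x ∈ ℝ^p, where A is the divergence-based Stein operator of q; and (ii) E_q[Φ_{μ_j}] = 0. Hence Φ_{μ_j} is the Wasserstein score function of the mean parameter μ_j. -/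

import Mathlib

/-!
The gradient of `Φ(x) = x_j - μ_j` is the constant field `e_j`, so `A(∇Φ) = ∂_j q / q`. Both this
and `∂_{μ_j} log q` come from differentiating the quadratic form `(x - μ)ᵀ Σ⁻¹ (x - μ)` along a
coordinate line, which gives `2 (Σ⁻¹ (x - μ))_j` since `Σ⁻¹` is symmetric.

The mean vanishes because the integrand is odd under the measure-preserving reflection
`x ↦ 2μ - x`; this gives `∫ f = -∫ f` outright, so no integrability argument is needed.
-/

open MeasureTheory Real Matrix

/-- Partial derivative in the `i`-th coordinate. -/
noncomputable def pdv {n : ℕ} (i : Fin n) (f : (Fin n → ℝ) → ℝ) (x : Fin n → ℝ) : ℝ :=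
  deriv (fun t => f (Function.update x i t)) (x i)

/-- Gradient of a scalar function on ℝ^n. -/
noncomputable def gradv {n : ℕ} (f : (Fin n → ℝ) → ℝ) (x : Fin n → ℝ) : Fin n → ℝ :=
  fun i => pdv i f x

/-- Divergence of a vector field on ℝ^n. -/
noncomputable def divv {n : ℕ} (f : (Fin n → ℝ) → (Fin n → ℝ)) (x : Fin n → ℝ) : ℝ :=
  ∑ i, pdv i (fun y => f y i) x

/-- Divergence-based Stein operator `A_q f = div(q f) / q`. -/
noncomputable def stein {n : ℕ} (q : (Fin n → ℝ) → ℝ) (f : (Fin n → ℝ) → (Fin n → ℝ))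
    (x : Fin n → ℝ) : ℝ :=
  divv (fun y i => q y * f y i) x / q x

/-- The density of the normal distribution `N(μ, Σ)` on ℝ^p. -/
noncomputable def gaussDens {p : ℕ} (μ : Fin p → ℝ) (Cov : Matrix (Fin p) (Fin p) ℝ)
    (x : Fin p → ℝ) : ℝ :=
  (2 * Real.pi) ^ (-(p : ℝ) / 2) * Cov.det ^ (-(1 : ℝ) / 2)
    * Real.exp (-((x - μ) ⬝ᵥ (Cov⁻¹ *ᵥ (x - μ))) / 2)

section Calculus

variable {ι : Type*} [Fintype ι] {c d : ℝ → ι → ℝ} {c' d' : ι → ℝ} {t : ℝ}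

theorem HasDerivAt.dotProduct (hc : HasDerivAt c c' t) (hd : HasDerivAt d d' t) :
    HasDerivAt (fun s => c s ⬝ᵥ d s) (c' ⬝ᵥ d t + c t ⬝ᵥ d') t := by
  simp only [_root_.dotProduct, ← Finset.sum_add_distrib]
  exact HasDerivAt.fun_sum fun i _ => (hasDerivAt_pi.1 hc i).mul (hasDerivAt_pi.1 hd i)

theorem HasDerivAt.matrix_mulVec (A : Matrix ι ι ℝ) (hc : HasDerivAt c c' t) :
    HasDerivAt (fun s => A *ᵥ c s) (A *ᵥ c') t :=
  hasDerivAt_pi.2 fun i => by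
    simpa [mulVec] using (hasDerivAt_const t (A i)).dotProduct hc

theorem HasDerivAt.dotProduct_mulVec_self {A : Matrix ι ι ℝ} (hA : A.IsSymm)
    (hc : HasDerivAt c c' t) :
    HasDerivAt (fun s => c s ⬝ᵥ A *ᵥ c s) (2 * (c' ⬝ᵥ A *ᵥ c t)) t := by
  convert hc.dotProduct (hc.matrix_mulVec A) using 1
  rw [dotProduct_mulVec (c t), ← mulVec_transpose, hA.eq, dotProduct_comm (A *ᵥ c t)]
  ring

end Calculus

section Coordinates

variable {n : ℕ}

theorem pdv_eq_of_hasDerivAt {f : (Fin n → ℝ) → ℝ} {x : Fin n → ℝ} {i : Fin n} {d : ℝ}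
    (h : HasDerivAt (fun t => f (Function.update x i t)) d (x i)) : pdv i f x = d :=
  h.deriv

theorem gradv_apply_sub_const (j : Fin n) (c : ℝ) (y : Fin n → ℝ) :
    gradv (fun z => z j - c) y = Pi.single j 1 := by
  funext i
  refine pdv_eq_of_hasDerivAt ?_
  rw [Pi.single_comm]
  exact (hasDerivAt_pi.1 (hasDerivAt_update y i (y i)) j).sub_const c

theorem divv_mul_single (f : (Fin n → ℝ) → ℝ) (j : Fin n) (x : Fin n → ℝ) :
    divv (fun y i => f y * (Pi.single j 1 : Fin n → ℝ) i) x = pdv j f x := by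
  rw [divv, Finset.sum_eq_single j]
  · simp
  · intro i _ hij
    simp [Pi.single_eq_of_ne hij, pdv]
  · simp

theorem stein_const_single (q : (Fin n → ℝ) → ℝ) (j : Fin n) (x : Fin n → ℝ) :
    stein q (fun _ => Pi.single j 1) x = pdv j q x / q x := by
  rw [stein, divv_mul_single]

end Coordinates

theorem integral_eq_zero_of_sub_left_eq_neg {G : Type*} [MeasurableSpace G] [AddGroup G]
    [MeasurableAdd G] [MeasurableNeg G] (μ : Measure G) [μ.IsNegInvariant] [μ.IsAddLeftInvariant]
    {f : G → ℝ} (a : G) (hf : ∀ x, f (a - x) = -f x) : ∫ x, f x ∂μ = 0 := by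
  have h := integral_sub_left_eq_self f μ a
  simp only [hf, integral_neg] at h
  linarith

theorem Matrix.PosDef.isSymm_inv {n : Type*} [Fintype n] [DecidableEq n] {M : Matrix n n ℝ}
    (hM : M.PosDef) : M⁻¹.IsSymm :=
  isHermitian_iff_isSymm.1 hM.inv.isHermitian

section Gaussian

variable {p : ℕ} {Cov : Matrix (Fin p) (Fin p) ℝ}

theorem gaussDens_pos (μ : Fin p → ℝ) (hCov : Cov.PosDef) (x : Fin p → ℝ) :
    0 < gaussDens μ Cov x := by
  have hdet := hCov.det_pos
  unfold gaussDens
  positivity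

theorem gaussDens_reflect (μ x : Fin p → ℝ) : gaussDens μ Cov (μ + μ - x) = gaussDens μ Cov x := by
  have h : μ + μ - x - μ = -(x - μ) := by abel
  rw [gaussDens, gaussDens, h, mulVec_neg, dotProduct_neg, neg_dotProduct, neg_neg]

theorem HasDerivAt.gaussDens (hCov : Cov⁻¹.IsSymm) {m y : ℝ → Fin p → ℝ} {m' y' : Fin p → ℝ}
    {t : ℝ} (hm : HasDerivAt m m' t) (hy : HasDerivAt y y' t) :
    HasDerivAt (fun s => gaussDens (m s) Cov (y s))
      (-(gaussDens (m t) Cov (y t) * ((y' - m') ⬝ᵥ Cov⁻¹ *ᵥ (y t - m t)))) t := by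
  have hQ := (hy.sub hm).dotProduct_mulVec_self hCov
  refine (((hQ.neg.div_const 2).exp).const_mul
    ((2 * Real.pi) ^ (-(p : ℝ) / 2) * Cov.det ^ (-(1 : ℝ) / 2))).congr_deriv ?_
  simp only [_root_.gaussDens, Pi.sub_apply, Pi.neg_apply]
  ring

theorem pdv_gaussDens (μ : Fin p → ℝ) (hCov : Cov⁻¹.IsSymm) (x : Fin p → ℝ) (j : Fin p) :
    pdv j (gaussDens μ Cov) x = -(gaussDens μ Cov x * (Cov⁻¹ *ᵥ (x - μ)) j) := by
  refine pdv_eq_of_hasDerivAt ?_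
  simpa [single_dotProduct] using
    (hasDerivAt_const (x j) μ).gaussDens hCov (hasDerivAt_update x j (x j))

theorem pdv_log_gaussDens_mean (μ : Fin p → ℝ) (hCov : Cov.PosDef) (x : Fin p → ℝ)
    (j : Fin p) :
    pdv j (fun m => Real.log (gaussDens m Cov x)) μ = (Cov⁻¹ *ᵥ (x - μ)) j := by
  have hq := (gaussDens_pos μ hCov x).ne'
  have h := ((hasDerivAt_update μ j (μ j)).gaussDens hCov.isSymm_inv
    (hasDerivAt_const (μ j) x)).log (by simpa using hq)
  refine pdv_eq_of_hasDerivAt (h.congr_deriv ?_)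
  field_simp [hq]
  simp [single_dotProduct]

end Gaussian

theorem stmt12_general {p : ℕ} (μ : Fin p → ℝ) (Cov : Matrix (Fin p) (Fin p) ℝ)
    (hpd : Cov.PosDef) (j : Fin p) :
    (∀ x : Fin p → ℝ,
        stein (gaussDens μ Cov) (fun y => gradv (fun z => z j - μ j) y) x
          = -((Cov⁻¹ *ᵥ (x - μ)) j)
        ∧ -((Cov⁻¹ *ᵥ (x - μ)) j)
          = - pdv j (fun m => Real.log (gaussDens m Cov x)) μ)
    ∧ ∫ x, gaussDens μ Cov x * (x j - μ j) = 0 := by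
  refine ⟨fun x => ⟨?_, by rw [pdv_log_gaussDens_mean μ hpd]⟩, ?_⟩
  · rw [funext (gradv_apply_sub_const j (μ j)), stein_const_single,
      pdv_gaussDens μ hpd.isSymm_inv]
    field_simp [(gaussDens_pos μ hpd x).ne']
  · refine integral_eq_zero_of_sub_left_eq_neg volume (μ + μ) fun x => ?_
    rw [gaussDens_reflect]
    simp only [Pi.sub_apply, Pi.add_apply]
    ring

/-- for the normal distribution `N(μ, Σ)`, the function `Φ(x) = x_j − μ_j`
satisfies `A(∇ₓΦ)(x) = −(Σ⁻¹(x−μ))_j = −∂_{μ_j} log q(x)` and `E_q[Φ] = 0`; i.e. it is the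
Wasserstein score function of the mean parameter `μ_j`. -/
theorem stmt12 {p : ℕ} (μ : Fin p → ℝ) (Cov : Matrix (Fin p) (Fin p) ℝ)
    (hsym : Cov.IsSymm) (hpd : Cov.PosDef) (j : Fin p) :
    (∀ x : Fin p → ℝ,
        stein (gaussDens μ Cov) (fun y => gradv (fun z => z j - μ j) y) x
          = -((Cov⁻¹ *ᵥ (x - μ)) j)
        ∧ -((Cov⁻¹ *ᵥ (x - μ)) j)
          = - pdv j (fun m => Real.log (gaussDens m Cov x)) μ)
    ∧ ∫ x, gaussDens μ Cov x * (x j - μ j) = 0 :=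
  stmt12_general μ Cov hpd j
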